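/- Let a ∈ (0,1], δ > 0, p ∈ (1,∞) with pδ > 1, let M > 0 and γ ≥ 0, and set ⟨t⟩ = √(1+t²). Let K : (0,∞) → [0,∞] be measurable with K(s) ≤ M s^{−(a+δ)} for all s ≥ 1 and K(s) ≤ M e^{γ s} for all 0 < s < 1. Then there exists a constant C > 0 (depending only on a, δ, p, M, γ) such that for every measurable function g : (0,∞) → [0,∞], (∫_2^∞ ( ⟨t⟩^a ∫_0^{t} K(t−τ) g(τ) dτ )^p dt)^{1/p} ≤ C (∫_0^∞ (⟨τ⟩ g(τ))^p dτ)^{1/p}. -/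

import Mathlib

/-!
Write `⟨t⟩ = √(1 + t ^ 2)` and `s = t - τ` for `0 < τ < t`. If `s < 1`, or `1 ≤ s ≤ τ`, then
`⟨t⟩ ≤ ⟨τ⟩ + s ≤ 2⟨τ⟩`, so the weight `⟨t⟩ ^ a` moves onto `g`, and what is left of `K(s)` is
dominated by the integrable kernel `(1 + |s|) ^ (-(1 + δ))`. If `s > τ` then `s > t / 2`, and the
decay of `K` absorbs the weight: `⟨t⟩ ^ a K(s) ≲ t ^ (-δ)`. Hence
`⟨t⟩ ^ a ∫ K(t - τ) g(τ) dτ ≲ ((1 + |·|) ^ (-(1 + δ)) ⋆ ⟨·⟩ g)(t) + t ^ (-δ) ‖g‖₁`.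
Young's inequality bounds the first term in `Lᵖ`; the second is in `Lᵖ(2, ∞)` because `pδ > 1`,
and `‖g‖₁ ≤ ‖⟨·⟩⁻¹‖_q ‖⟨·⟩ g‖_p` by Hölder.
-/

open MeasureTheory Real Set
open scoped ENNReal

section Convolution

variable {G : Type*} [MeasurableSpace G] [AddGroup G] [MeasurableAdd G] [MeasurableSub₂ G]
  [MeasurableNeg G] {μ : Measure G} [μ.IsAddLeftInvariant] [μ.IsNegInvariant]
  {h f : G → ℝ≥0∞} {p : ℝ}

theorem rpow_lintegral_conv_le (hh : Measurable h) (hf : Measurable f) (hp : 1 ≤ p)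
    (u : Set G) (x : G) :
    (∫⁻ y in u, h (x - y) * f y ∂μ) ^ p
      ≤ (∫⁻ z, h z ∂μ) ^ (p - 1) * ∫⁻ y in u, h (x - y) * f y ^ p ∂μ := by
  have hp0 : 0 < p := zero_lt_one.trans_le hp
  have hhx : Measurable fun y => h (x - y) := hh.comp (measurable_const.sub measurable_id)
  have hq : 0 ≤ 1 - 1 / p := sub_nonneg.2 ((div_le_one hp0).2 hp)
  -- Hölder with the exponents `1 - 1/p` and `1/p`, splitting `h = h ^ (1 - 1/p) * h ^ (1/p)`.
  have hsplit : ∀ y, h (x - y) * f y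
      = h (x - y) ^ (1 - 1 / p) * (h (x - y) * f y ^ p) ^ (1 / p) := fun y => by
    rw [ENNReal.mul_rpow_of_nonneg _ _ (by positivity), ← ENNReal.rpow_mul,
      mul_one_div_cancel hp0.ne', ENNReal.rpow_one, ← mul_assoc,
      ← ENNReal.rpow_add_of_nonneg _ _ hq (by positivity), sub_add_cancel, ENNReal.rpow_one]
  have holder := (lintegral_congr hsplit).trans_le <| ENNReal.lintegral_mul_norm_pow_le
    (μ := μ.restrict u) hhx.aemeasurable (hhx.mul (hf.pow_const p)).aemeasurable hq
    (by positivity) (sub_add_cancel 1 _)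
  have hmass : ∫⁻ y in u, h (x - y) ∂μ ≤ ∫⁻ z, h z ∂μ :=
    (setLIntegral_le_lintegral _ _).trans_eq (lintegral_sub_left_eq_self h x)
  calc (∫⁻ y in u, h (x - y) * f y ∂μ) ^ p
      ≤ ((∫⁻ y in u, h (x - y) ∂μ) ^ (1 - 1 / p)
          * (∫⁻ y in u, h (x - y) * f y ^ p ∂μ) ^ (1 / p)) ^ p :=
        ENNReal.rpow_le_rpow holder hp0.le
    _ = (∫⁻ y in u, h (x - y) ∂μ) ^ (p - 1) * ∫⁻ y in u, h (x - y) * f y ^ p ∂μ := by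
        rw [ENNReal.mul_rpow_of_nonneg _ _ hp0.le, ← ENNReal.rpow_mul, ← ENNReal.rpow_mul,
          one_div_mul_cancel hp0.ne', ENNReal.rpow_one, sub_mul, one_mul,
          one_div_mul_cancel hp0.ne']
    _ ≤ _ := by gcongr

theorem lintegral_Lp_conv_le [SFinite μ] [μ.IsAddRightInvariant] (hh : Measurable h)
    (hf : Measurable f) (hp : 1 ≤ p) (s u : Set G) :
    (∫⁻ x in s, (∫⁻ y in u, h (x - y) * f y ∂μ) ^ p ∂μ) ^ (1 / p)
      ≤ (∫⁻ z, h z ∂μ) * (∫⁻ y in u, f y ^ p ∂μ) ^ (1 / p) := by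
  have hp0 : 0 < p := zero_lt_one.trans_le hp
  set H := ∫⁻ z, h z ∂μ
  have hmeas : Measurable (Function.uncurry fun x y => h (x - y) * f y ^ p) :=
    (hh.comp measurable_sub).mul ((hf.comp measurable_snd).pow_const p)
  have hswap : ∫⁻ x in s, ∫⁻ y in u, h (x - y) * f y ^ p ∂μ ∂μ
      ≤ H * ∫⁻ y in u, f y ^ p ∂μ := by
    rw [lintegral_lintegral_swap hmeas.aemeasurable, ← lintegral_const_mul _ (hf.pow_const p)]
    refine lintegral_mono fun y => ?_
    rw [lintegral_mul_const _ (by fun_prop)]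
    gcongr
    exact (setLIntegral_le_lintegral _ _).trans_eq (lintegral_sub_right_eq_self h y)
  calc (∫⁻ x in s, (∫⁻ y in u, h (x - y) * f y ∂μ) ^ p ∂μ) ^ (1 / p)
      ≤ (∫⁻ x in s, H ^ (p - 1) * ∫⁻ y in u, h (x - y) * f y ^ p ∂μ ∂μ) ^ (1 / p) := by
        gcongr with x
        exact rpow_lintegral_conv_le hh hf hp u x
    _ ≤ (H ^ (p - 1) * (H * ∫⁻ y in u, f y ^ p ∂μ)) ^ (1 / p) := by
        have hconv : Measurable fun x => ∫⁻ y in u, h (x - y) * f y ^ p ∂μ :=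
          hmeas.lintegral_prod_right'
        rw [lintegral_const_mul _ hconv]
        gcongr
    _ = H * (∫⁻ y in u, f y ^ p ∂μ) ^ (1 / p) := by
        nth_rw 2 [← ENNReal.rpow_one H]
        rw [← mul_assoc, ← ENNReal.rpow_add_of_nonneg _ _ (by linarith) zero_le_one,
          sub_add_cancel, ENNReal.mul_rpow_of_nonneg _ _ (by positivity), ← ENNReal.rpow_mul,
          mul_one_div_cancel hp0.ne', ENNReal.rpow_one]

end Convolution

theorem lintegral_one_add_abs_rpow_neg_ne_top {r : ℝ} (hr : 1 < r) :
    ∫⁻ s : ℝ, ENNReal.ofReal ((1 + |s|) ^ (-r)) ≠ ∞ := by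
  simpa only [Real.norm_eq_abs] using
    (finite_integral_one_add_norm (E := ℝ) (μ := volume) (by simpa using hr)).ne

theorem lintegral_inv_sqrt_one_add_sq_rpow_ne_top {q : ℝ} (hq : 1 < q) :
    ∫⁻ τ : ℝ, (ENNReal.ofReal √(1 + τ ^ 2))⁻¹ ^ q ≠ ∞ := by
  have heq : ∀ τ : ℝ, (ENNReal.ofReal √(1 + τ ^ 2))⁻¹ ^ q
      = ENNReal.ofReal ((1 + ‖τ‖ ^ 2) ^ (-q / 2)) := fun τ => by
    rw [← ENNReal.ofReal_inv_of_pos (by positivity),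
      ENNReal.ofReal_rpow_of_nonneg (by positivity) (by linarith), Real.norm_eq_abs, sq_abs,
      Real.sqrt_eq_rpow, ← Real.rpow_neg_one, ← Real.rpow_mul (by positivity),
      ← Real.rpow_mul (by positivity)]
    ring_nf
  simp_rw [heq]
  exact (integrable_rpow_neg_one_add_norm_sq (E := ℝ) (μ := volume)
    (by simpa using hq)).lintegral_lt_top.ne

theorem lintegral_Lp_const_mul {α : Type*} [MeasurableSpace α] {μ : Measure α}
    {f : α → ℝ≥0∞} (hf : AEMeasurable f μ) {p : ℝ} (hp : 0 < p) (c : ℝ≥0∞) :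
    (∫⁻ x, (c * f x) ^ p ∂μ) ^ (1 / p) = c * (∫⁻ x, f x ^ p ∂μ) ^ (1 / p) := by
  simp_rw [ENNReal.mul_rpow_of_nonneg _ _ hp.le]
  rw [lintegral_const_mul'' _ (hf.pow_const p), ENNReal.mul_rpow_of_nonneg _ _ (by positivity),
    ← ENNReal.rpow_mul, mul_one_div_cancel hp.ne', ENNReal.rpow_one]

theorem lintegral_le_Lq_inv_mul_Lp {α : Type*} [MeasurableSpace α] (μ : Measure α)
    {w g : α → ℝ≥0∞} (hw : Measurable w) (hg : Measurable g) (hw0 : ∀ x, w x ≠ 0)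
    (hw_top : ∀ x, w x ≠ ∞) {p q : ℝ} (hpq : p.HolderConjugate q) :
    ∫⁻ x, g x ∂μ ≤ (∫⁻ x, (w x)⁻¹ ^ q ∂μ) ^ (1 / q) * (∫⁻ x, (w x * g x) ^ p ∂μ) ^ (1 / p) := by
  calc ∫⁻ x, g x ∂μ = ∫⁻ x, ((fun x => (w x)⁻¹) * fun x => w x * g x) x ∂μ :=
        lintegral_congr fun x => by
          simp only [Pi.mul_apply, ← mul_assoc, ENNReal.inv_mul_cancel (hw0 x) (hw_top x), one_mul]
    _ ≤ _ := ENNReal.lintegral_mul_le_Lp_mul_Lq μ hpq.symm hw.inv.aemeasurable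
        (hw.mul hg).aemeasurable

theorem lintegral_Ioi_ofReal_rpow_neg_rpow_ne_top {c δ p : ℝ} (hc : 0 < c) (hp : 0 < p)
    (hpδ : 1 < p * δ) : ∫⁻ t in Ioi c, ENNReal.ofReal (t ^ (-δ)) ^ p ≠ ∞ := by
  rw [setLIntegral_congr_fun measurableSet_Ioi fun t (ht : c < t) => by
    rw [ENNReal.ofReal_rpow_of_nonneg (Real.rpow_nonneg (hc.trans ht).le _) hp.le,
      ← Real.rpow_mul (hc.trans ht).le]]
  exact (integrableOn_Ioi_rpow_of_lt (by nlinarith) hc).setLIntegral_lt_top.ne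

theorem sqrt_one_add_sq_add_le (x y : ℝ) : √(1 + (x + y) ^ 2) ≤ √(1 + x ^ 2) + |y| := by
  have hx : |x| ≤ √(1 + x ^ 2) := Real.abs_le_sqrt (by linarith)
  have hsq : √(1 + x ^ 2) ^ 2 = 1 + x ^ 2 := Real.sq_sqrt (by positivity)
  rw [Real.sqrt_le_iff]
  refine ⟨by positivity, ?_⟩
  nlinarith [mul_le_mul_of_nonneg_right hx (abs_nonneg y), le_abs_self (x * y), abs_mul x y,
    sq_abs y]

theorem rpow_mul_rpow_neg_add_le {x s a δ : ℝ} (hs : 0 < s) (hsx : s ≤ x) (ha : a ≤ 1) :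
    x ^ a * s ^ (-(a + δ)) ≤ x * s ^ (-(1 + δ)) := by
  have hx : 0 < x := hs.trans_le hsx
  have hratio : (x / s) ^ a ≤ x / s := Real.rpow_le_self_of_one_le ((one_le_div hs).2 hsx) ha
  calc x ^ a * s ^ (-(a + δ)) = (x / s) ^ a * s ^ (-δ) := by
        rw [Real.div_rpow hx.le hs.le, neg_add, Real.rpow_add hs, Real.rpow_neg hs.le]
        field_simp
    _ ≤ x / s * s ^ (-δ) := by gcongr
    _ = x * s ^ (-(1 + δ)) := by
        rw [neg_add, Real.rpow_add hs, Real.rpow_neg_one]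
        ring

theorem rpow_neg_le_two_rpow_mul {y z r : ℝ} (hz : 0 < z) (hr : 0 ≤ r) (hzy : z ≤ 2 * y) :
    y ^ (-r) ≤ 2 ^ r * z ^ (-r) := by
  calc y ^ (-r) = 2 ^ r * (2 * y) ^ (-r) := by
        rw [Real.mul_rpow zero_le_two (by linarith), ← mul_assoc, ← Real.rpow_add two_pos,
          add_neg_cancel, Real.rpow_zero, one_mul]
    _ ≤ 2 ^ r * z ^ (-r) := mul_le_mul_of_nonneg_left
        (Real.rpow_le_rpow_of_nonpos hz hzy (neg_nonpos.2 hr)) (by positivity)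

theorem two_rpow_two_add (δ : ℝ) : (2 : ℝ) ^ (2 + δ) = 2 * 2 ^ (1 + δ) := by
  rw [show (2 : ℝ) + δ = 1 + (1 + δ) by ring, Real.rpow_add two_pos (1 : ℝ), Real.rpow_one]

section KernelBounds

variable {a δ M γ t τ : ℝ}

theorem sqrt_one_add_sq_le_two_mul (hτ : t - τ ≤ √(1 + τ ^ 2)) (hs : 0 ≤ t - τ) :
    √(1 + t ^ 2) ≤ 2 * √(1 + τ ^ 2) := by
  have := sqrt_one_add_sq_add_le τ (t - τ)
  rw [add_sub_cancel, abs_of_nonneg hs] at this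
  linarith

theorem bracket_rpow_mul_le_of_lt_one (ha : a ≤ 1) (hδ : 0 ≤ δ) (hM : 0 ≤ M) (hγ : 0 ≤ γ)
    (hs0 : 0 < t - τ) (hs1 : t - τ < 1) :
    √(1 + t ^ 2) ^ a * (M * exp (γ * (t - τ)))
      ≤ 2 ^ (2 + δ) * M * exp γ * ((1 + |t - τ|) ^ (-(1 + δ)) * √(1 + τ ^ 2)) := by
  have hwt : √(1 + t ^ 2) ^ a ≤ √(1 + t ^ 2) :=
    Real.rpow_le_self_of_one_le (Real.one_le_sqrt.2 (by nlinarith)) ha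
  have hwτ : √(1 + t ^ 2) ≤ 2 * √(1 + τ ^ 2) := sqrt_one_add_sq_le_two_mul
    (hs1.le.trans (Real.one_le_sqrt.2 (by nlinarith))) hs0.le
  have hexp : exp (γ * (t - τ)) ≤ exp γ := Real.exp_le_exp.2 (by nlinarith)
  have hker : 1 ≤ 2 ^ (1 + δ) * (1 + |t - τ|) ^ (-(1 + δ)) := by
    simpa using rpow_neg_le_two_rpow_mul (y := 1) (r := 1 + δ) (by positivity) (by linarith)
      (by rw [abs_of_pos hs0]; linarith)
  calc √(1 + t ^ 2) ^ a * (M * exp (γ * (t - τ)))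
      ≤ 2 * √(1 + τ ^ 2) * (M * exp γ) * 1 := by
        rw [mul_one]; gcongr; exact hwt.trans hwτ
    _ ≤ 2 * √(1 + τ ^ 2) * (M * exp γ) * (2 ^ (1 + δ) * (1 + |t - τ|) ^ (-(1 + δ))) := by
        gcongr
    _ = _ := by rw [two_rpow_two_add]; ring

theorem bracket_rpow_mul_le_of_le (ha : a ≤ 1) (hδ : 0 ≤ δ) (hM : 0 ≤ M)
    (hs1 : 1 ≤ t - τ) (hsτ : t - τ ≤ τ) :
    √(1 + t ^ 2) ^ a * (M * (t - τ) ^ (-(a + δ)))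
      ≤ 2 ^ (2 + δ) * M * ((1 + |t - τ|) ^ (-(1 + δ)) * √(1 + τ ^ 2)) := by
  have hs0 : 0 < t - τ := by linarith
  have hτ : τ ≤ √(1 + τ ^ 2) := (le_abs_self τ).trans (Real.abs_le_sqrt (by linarith))
  have hst : t - τ ≤ √(1 + t ^ 2) :=
    (show t - τ ≤ t by linarith).trans ((le_abs_self t).trans (Real.abs_le_sqrt (by linarith)))
  have hker : (t - τ) ^ (-(1 + δ)) ≤ 2 ^ (1 + δ) * (1 + |t - τ|) ^ (-(1 + δ)) :=
    rpow_neg_le_two_rpow_mul (by positivity) (by linarith) (by rw [abs_of_pos hs0]; linarith)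
  calc √(1 + t ^ 2) ^ a * (M * (t - τ) ^ (-(a + δ)))
      = M * (√(1 + t ^ 2) ^ a * (t - τ) ^ (-(a + δ))) := by ring
    _ ≤ M * (2 * √(1 + τ ^ 2) * (2 ^ (1 + δ) * (1 + |t - τ|) ^ (-(1 + δ)))) := by
        refine mul_le_mul_of_nonneg_left ?_ hM
        refine (rpow_mul_rpow_neg_add_le hs0 hst ha).trans ?_
        gcongr
        exact sqrt_one_add_sq_le_two_mul (hsτ.trans hτ) hs0.le
    _ = _ := by rw [two_rpow_two_add]; ring

theorem bracket_rpow_mul_le_of_lt (ha : a ≤ 1) (hδ : 0 ≤ δ) (hM : 0 ≤ M) (hτ : 0 ≤ τ)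
    (hs1 : 1 ≤ t - τ) (hτs : τ < t - τ) :
    √(1 + t ^ 2) ^ a * (M * (t - τ) ^ (-(a + δ))) ≤ 2 ^ (2 + δ) * M * t ^ (-δ) := by
  have hs0 : 0 < t - τ := by linarith
  have ht : 1 ≤ t := by linarith
  have hst : t - τ ≤ √(1 + t ^ 2) :=
    (show t - τ ≤ t by linarith).trans ((le_abs_self t).trans (Real.abs_le_sqrt (by linarith)))
  have hwt : √(1 + t ^ 2) ≤ 2 * t := by
    have := sqrt_one_add_norm_sq_le t
    rw [Real.norm_eq_abs, sq_abs, abs_of_nonneg (by linarith)] at this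
    linarith
  have hker : (t - τ) ^ (-(1 + δ)) ≤ 2 ^ (1 + δ) * t ^ (-(1 + δ)) :=
    rpow_neg_le_two_rpow_mul (by linarith) (by linarith) (by linarith)
  have hpow : t * t ^ (-(1 + δ)) = t ^ (-δ) := by
    rw [neg_add, Real.rpow_add (by linarith), Real.rpow_neg_one]
    field_simp
  calc √(1 + t ^ 2) ^ a * (M * (t - τ) ^ (-(a + δ)))
      = M * (√(1 + t ^ 2) ^ a * (t - τ) ^ (-(a + δ))) := by ring
    _ ≤ M * (2 * t * (2 ^ (1 + δ) * t ^ (-(1 + δ)))) := by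
        refine mul_le_mul_of_nonneg_left ((rpow_mul_rpow_neg_add_le hs0 hst ha).trans ?_) hM
        gcongr
    _ = _ := by rw [two_rpow_two_add, ← hpow]; ring

theorem ofReal_bracket_rpow_mul_le (ha : a ≤ 1) (hδ : 0 ≤ δ) (hM : 0 ≤ M) (hγ : 0 ≤ γ)
    {K : ℝ → ℝ≥0∞} (hK1 : ∀ s : ℝ, 1 ≤ s → K s ≤ ENNReal.ofReal (M * s ^ (-(a + δ))))
    (hK0 : ∀ s : ℝ, 0 < s → s < 1 → K s ≤ ENNReal.ofReal (M * exp (γ * s)))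
    (hτ : 0 ≤ τ) (hτt : τ < t) :
    ENNReal.ofReal (√(1 + t ^ 2) ^ a) * K (t - τ)
      ≤ ENNReal.ofReal (2 ^ (2 + δ) * M * exp γ) *
        (ENNReal.ofReal ((1 + |t - τ|) ^ (-(1 + δ))) * ENNReal.ofReal √(1 + τ ^ 2)
          + ENNReal.ofReal (t ^ (-δ))) := by
  set C := 2 ^ (2 + δ) * M * exp γ
  set k := (1 + |t - τ|) ^ (-(1 + δ))
  have hC : 2 ^ (2 + δ) * M ≤ C := le_mul_of_one_le_right (by positivity) (Real.one_le_exp hγ)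
  have hk : 0 ≤ k := by positivity
  have ht : 0 ≤ t ^ (-δ) := Real.rpow_nonneg (by linarith) _
  have hlift : ∀ b, K (t - τ) ≤ ENNReal.ofReal b →
      √(1 + t ^ 2) ^ a * b ≤ C * (k * √(1 + τ ^ 2) + t ^ (-δ)) →
      ENNReal.ofReal (√(1 + t ^ 2) ^ a) * K (t - τ)
        ≤ ENNReal.ofReal (C * (k * √(1 + τ ^ 2) + t ^ (-δ))) :=
    fun b hKb hb => (by gcongr : _ ≤ ENNReal.ofReal (√(1 + t ^ 2) ^ a) * _).trans
      ((ENNReal.ofReal_mul (by positivity)).symm.trans_le (ENNReal.ofReal_le_ofReal hb))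
  rw [← ENNReal.ofReal_mul hk, ← ENNReal.ofReal_add (by positivity) ht,
    ← ENNReal.ofReal_mul (by positivity)]
  rcases lt_or_ge (t - τ) 1 with hs1 | hs1
  · refine hlift _ (hK0 _ (by linarith) hs1) ?_
    refine (bracket_rpow_mul_le_of_lt_one ha hδ hM hγ (by linarith) hs1).trans ?_
    gcongr
    exact le_add_of_nonneg_right ht
  rcases le_or_gt (t - τ) τ with hsτ | hτs
  · refine hlift _ (hK1 _ hs1) ((bracket_rpow_mul_le_of_le ha hδ hM hs1 hsτ).trans ?_)
    rw [mul_add]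
    exact (mul_le_mul_of_nonneg_right hC (by positivity)).trans
      (le_add_of_nonneg_right (by positivity))
  · refine hlift _ (hK1 _ hs1) ((bracket_rpow_mul_le_of_lt ha hδ hM hτ hs1 hτs).trans ?_)
    rw [mul_add]
    exact (mul_le_mul_of_nonneg_right hC ht).trans (le_add_of_nonneg_left (by positivity))

theorem ofReal_bracket_rpow_mul_lintegral_le (ha : a ≤ 1) (hδ : 0 ≤ δ) (hM : 0 ≤ M)
    (hγ : 0 ≤ γ) {K g : ℝ → ℝ≥0∞} (hg : Measurable g)
    (hK1 : ∀ s : ℝ, 1 ≤ s → K s ≤ ENNReal.ofReal (M * s ^ (-(a + δ))))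
    (hK0 : ∀ s : ℝ, 0 < s → s < 1 → K s ≤ ENNReal.ofReal (M * exp (γ * s))) :
    ENNReal.ofReal (√(1 + t ^ 2) ^ a) * ∫⁻ τ in Ioc 0 t, K (t - τ) * g τ
      ≤ ENNReal.ofReal (2 ^ (2 + δ) * M * exp γ) *
        ((∫⁻ τ in Ioi 0, ENNReal.ofReal ((1 + |t - τ|) ^ (-(1 + δ)))
            * (ENNReal.ofReal √(1 + τ ^ 2) * g τ))
          + ENNReal.ofReal (t ^ (-δ)) * ∫⁻ τ in Ioi 0, g τ) := by
  calc ENNReal.ofReal (√(1 + t ^ 2) ^ a) * ∫⁻ τ in Ioc 0 t, K (t - τ) * g τ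
      = ∫⁻ τ in Ioo 0 t, ENNReal.ofReal (√(1 + t ^ 2) ^ a) * K (t - τ) * g τ := by
        simp_rw [Measure.restrict_congr_set Ioo_ae_eq_Ioc, mul_assoc]
        exact (lintegral_const_mul' _ _ ENNReal.ofReal_ne_top).symm
    _ ≤ ∫⁻ τ in Ioo 0 t, ENNReal.ofReal (2 ^ (2 + δ) * M * exp γ) *
          (ENNReal.ofReal ((1 + |t - τ|) ^ (-(1 + δ))) * (ENNReal.ofReal √(1 + τ ^ 2) * g τ)
            + ENNReal.ofReal (t ^ (-δ)) * g τ) := by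
        refine setLIntegral_mono' measurableSet_Ioo fun τ hτ => ?_
        calc _ ≤ ENNReal.ofReal (2 ^ (2 + δ) * M * exp γ) *
              (ENNReal.ofReal ((1 + |t - τ|) ^ (-(1 + δ))) * ENNReal.ofReal √(1 + τ ^ 2)
                + ENNReal.ofReal (t ^ (-δ))) * g τ := mul_le_mul_of_nonneg_right
              (ofReal_bracket_rpow_mul_le ha hδ hM hγ hK1 hK0 hτ.1.le hτ.2) zero_le
          _ = _ := by ring
    _ ≤ ∫⁻ τ in Ioi 0, ENNReal.ofReal (2 ^ (2 + δ) * M * exp γ) *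
          (ENNReal.ofReal ((1 + |t - τ|) ^ (-(1 + δ))) * (ENNReal.ofReal √(1 + τ ^ 2) * g τ)
            + ENNReal.ofReal (t ^ (-δ)) * g τ) := lintegral_mono_set Ioo_subset_Ioi_self
    _ = _ := by
        rw [lintegral_const_mul' _ _ ENNReal.ofReal_ne_top,
          lintegral_add_right _ (hg.const_mul _), lintegral_const_mul _ hg]

end KernelBounds

/-- Meant for `q` the conjugate exponent of `p`. -/
noncomputable def duhamelConstant (δ p q M γ : ℝ) : ℝ≥0∞ :=
  ENNReal.ofReal (2 ^ (2 + δ) * M * exp γ) *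
    ((∫⁻ s, ENNReal.ofReal ((1 + |s|) ^ (-(1 + δ))))
      + (∫⁻ t in Ioi 2, ENNReal.ofReal (t ^ (-δ)) ^ p) ^ (1 / p)
        * (∫⁻ τ in Ioi 0, (ENNReal.ofReal √(1 + τ ^ 2))⁻¹ ^ q) ^ (1 / q))

theorem duhamelConstant_ne_top {δ p q M γ : ℝ} (hδ : 0 < δ) (hpq : p.HolderConjugate q)
    (hpδ : 1 < p * δ) : duhamelConstant δ p q M γ ≠ ∞ := by
  have hV := ne_top_of_le_ne_top (lintegral_inv_sqrt_one_add_sq_rpow_ne_top hpq.symm.lt)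
    (setLIntegral_le_lintegral (Ioi 0) _)
  refine ENNReal.mul_ne_top ENNReal.ofReal_ne_top (ENNReal.add_ne_top.2
    ⟨lintegral_one_add_abs_rpow_neg_ne_top (by linarith), ENNReal.mul_ne_top ?_ ?_⟩)
  · exact ENNReal.rpow_ne_top_of_nonneg (one_div_nonneg.2 hpq.nonneg)
      (lintegral_Ioi_ofReal_rpow_neg_rpow_ne_top two_pos hpq.pos hpδ)
  · exact ENNReal.rpow_ne_top_of_nonneg (one_div_nonneg.2 hpq.symm.nonneg) hV

theorem lintegral_rpow_duhamel_le {a δ p q M γ : ℝ} (ha : a ≤ 1) (hδ : 0 ≤ δ)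
    (hpq : p.HolderConjugate q) (hM : 0 ≤ M) (hγ : 0 ≤ γ) {K g : ℝ → ℝ≥0∞} (hg : Measurable g)
    (hK1 : ∀ s : ℝ, 1 ≤ s → K s ≤ ENNReal.ofReal (M * s ^ (-(a + δ))))
    (hK0 : ∀ s : ℝ, 0 < s → s < 1 → K s ≤ ENNReal.ofReal (M * exp (γ * s))) :
    (∫⁻ t in Ioi 2, (ENNReal.ofReal (√(1 + t ^ 2) ^ a) *
        ∫⁻ τ in Ioc 0 t, K (t - τ) * g τ) ^ p) ^ (1 / p)
      ≤ duhamelConstant δ p q M γ *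
        (∫⁻ τ in Ioi 0, (ENNReal.ofReal √(1 + τ ^ 2) * g τ) ^ p) ^ (1 / p) := by
  have hp0 : 0 < p := hpq.pos
  set k : ℝ → ℝ≥0∞ := fun s => ENNReal.ofReal ((1 + |s|) ^ (-(1 + δ)))
  set w : ℝ → ℝ≥0∞ := fun τ => ENNReal.ofReal √(1 + τ ^ 2)
  set C₀ := ENNReal.ofReal (2 ^ (2 + δ) * M * exp γ)
  set D := ∫⁻ τ in Ioi 0, g τ
  have hw : Measurable w := by fun_prop
  have hconv : Measurable fun t => ∫⁻ τ in Ioi 0, k (t - τ) * (w τ * g τ) := by fun_prop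
  calc _ ≤ (∫⁻ t in Ioi 2, (C₀ * ((∫⁻ τ in Ioi 0, k (t - τ) * (w τ * g τ))
          + ENNReal.ofReal (t ^ (-δ)) * D)) ^ p) ^ (1 / p) := by
        refine ENNReal.rpow_le_rpow (lintegral_mono fun t => ENNReal.rpow_le_rpow ?_ hp0.le)
          (by positivity)
        exact ofReal_bracket_rpow_mul_lintegral_le ha hδ hM hγ hg hK1 hK0
    _ ≤ C₀ * ((∫⁻ t in Ioi 2, (∫⁻ τ in Ioi 0, k (t - τ) * (w τ * g τ)) ^ p) ^ (1 / p)
          + (∫⁻ t in Ioi 2, ENNReal.ofReal (t ^ (-δ)) ^ p) ^ (1 / p) * D) := by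
        have hdecay : (∫⁻ t in Ioi 2, (ENNReal.ofReal (t ^ (-δ)) * D) ^ p) ^ (1 / p)
            = (∫⁻ t in Ioi 2, ENNReal.ofReal (t ^ (-δ)) ^ p) ^ (1 / p) * D := by
          simp_rw [mul_comm _ D]
          rw [lintegral_Lp_const_mul (by fun_prop) hp0, mul_comm]
        rw [lintegral_Lp_const_mul (by fun_prop) hp0, ← hdecay]
        gcongr
        exact ENNReal.lintegral_Lp_add_le hconv.aemeasurable (by fun_prop) hpq.lt.le
    _ ≤ _ := by
        have hD : D ≤ (∫⁻ τ in Ioi 0, (w τ)⁻¹ ^ q) ^ (1 / q)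
            * (∫⁻ τ in Ioi 0, (w τ * g τ) ^ p) ^ (1 / p) :=
          lintegral_le_Lq_inv_mul_Lp _ hw hg (fun τ => (ENNReal.ofReal_pos.2 (by positivity)).ne')
            (fun τ => ENNReal.ofReal_ne_top) hpq
        rw [duhamelConstant, mul_assoc (ENNReal.ofReal _) (_ + _), add_mul,
          mul_assoc _ _ (_ ^ (1 / p))]
        gcongr
        exact lintegral_Lp_conv_le (μ := volume) (by fun_prop) (hw.mul hg) hpq.lt.le _ _

theorem stmt9_general (a δ p M γ : ℝ) (ha1 : a ≤ 1) (hδ : 0 < δ) (hp : 1 < p)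
    (hpδ : 1 < p * δ) (hM : 0 < M) (hγ : 0 ≤ γ) :
    ∃ C : ℝ, 0 < C ∧
      ∀ K : ℝ → ℝ≥0∞, Measurable K →
        (∀ s : ℝ, 1 ≤ s → K s ≤ ENNReal.ofReal (M * s ^ (-(a + δ)))) →
        (∀ s : ℝ, 0 < s → s < 1 → K s ≤ ENNReal.ofReal (M * Real.exp (γ * s))) →
        ∀ g : ℝ → ℝ≥0∞, Measurable g →
          (∫⁻ t in Set.Ioi (2 : ℝ),
              (ENNReal.ofReal (Real.sqrt (1 + t ^ 2) ^ a) *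
                ∫⁻ τ in Set.Ioc (0 : ℝ) t, K (t - τ) * g τ) ^ p) ^ (1 / p)
            ≤ ENNReal.ofReal C *
              (∫⁻ τ in Set.Ioi (0 : ℝ),
                (ENNReal.ofReal (Real.sqrt (1 + τ ^ 2)) * g τ) ^ p) ^ (1 / p) := by
  obtain ⟨q, hpq⟩ : ∃ q, p.HolderConjugate q := ⟨_, Real.HolderConjugate.conjExponent hp⟩
  set C := duhamelConstant δ p q M γ
  refine ⟨C.toReal + 1, by positivity, fun K _ hK1 hK0 g hg => ?_⟩
  refine (lintegral_rpow_duhamel_le ha1 hδ.le hpq hM.le hγ hg hK1 hK0).trans ?_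
  gcongr
  rw [ENNReal.ofReal_add ENNReal.toReal_nonneg zero_le_one,
    ENNReal.ofReal_toReal (duhamelConstant_ne_top hδ hpq hpδ)]
  exact le_self_add

/-- Scalar core of Proposition 4.1: let `a ∈ (0,1]`, `δ > 0`, `p ∈ (1,∞)` with `pδ > 1`,
`M > 0`, `γ ≥ 0`, and let `K : (0,∞) → [0,∞]` be measurable with `K(s) ≤ M s^{-(a+δ)}`
for `s ≥ 1` and `K(s) ≤ M e^{γs}` for `0 < s < 1`. Then there is `C > 0`
(depending only on `a, δ, p, M, γ`) such that for every measurable `g : (0,∞) → [0,∞]`,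
`(∫_2^∞ (⟨t⟩^a ∫_0^t K(t-τ) g(τ) dτ)^p dt)^{1/p} ≤ C (∫_0^∞ (⟨τ⟩ g(τ))^p dτ)^{1/p}`,
where `⟨t⟩ = √(1+t²)`. -/
theorem stmt9 (a δ p M γ : ℝ) (ha0 : 0 < a) (ha1 : a ≤ 1) (hδ : 0 < δ) (hp : 1 < p)
    (hpδ : 1 < p * δ) (hM : 0 < M) (hγ : 0 ≤ γ) :
    ∃ C : ℝ, 0 < C ∧
      ∀ K : ℝ → ℝ≥0∞, Measurable K →
        (∀ s : ℝ, 1 ≤ s → K s ≤ ENNReal.ofReal (M * s ^ (-(a + δ)))) →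
        (∀ s : ℝ, 0 < s → s < 1 → K s ≤ ENNReal.ofReal (M * Real.exp (γ * s))) →
        ∀ g : ℝ → ℝ≥0∞, Measurable g →
          (∫⁻ t in Set.Ioi (2 : ℝ),
              (ENNReal.ofReal (Real.sqrt (1 + t ^ 2) ^ a) *
                ∫⁻ τ in Set.Ioc (0 : ℝ) t, K (t - τ) * g τ) ^ p) ^ (1 / p)
            ≤ ENNReal.ofReal C *
              (∫⁻ τ in Set.Ioi (0 : ℝ),
                (ENNReal.ofReal (Real.sqrt (1 + τ ^ 2)) * g τ) ^ p) ^ (1 / p) :=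
  stmt9_general a δ p M γ ha1 hδ hp hpδ hM hγ
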